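/- arXiv:2602.12551 — 2 statements merged into one kernel-verified Lean document; each statement's English description precedes it below -/
import Mathlib

section
/- Let H be a finite simple digraph containing two vertices u and v that are twins, and let H' be the digraph obtained from H by adding the edge directed from u to v. Then for every tournamenton W it holds that t(H', W) = t(H, W) / 2. -/
/-!
The edge weight of `H'` is `W (x u) (x v)` times that of `H`. Exchanging the coordinates `x u` and
`x v` preserves Lebesgue measure on the cube and, `u` and `v` being twins, the edge weight of `H`;
hence `W (x u) (x v)` and `W (x v) (x u)` have the same integral against it, and these two
integrals add up to `t(H, W)` because `W x y + W y x = 1`.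
-/

open MeasureTheory

noncomputable section

/-- The unit interval as a subset of `ℝ`. -/
def I01 : Set ℝ := Set.Icc 0 1

/-- A tournamenton: a measurable `W : [0,1]² → [0,1]` with `W x y + W y x = 1`. -/
def IsTournamenton (W : ℝ → ℝ → ℝ) : Prop :=
  Measurable (Function.uncurry W) ∧
  ∀ x ∈ I01, ∀ y ∈ I01, 0 ≤ W x y ∧ W x y ≤ 1 ∧ W x y + W y x = 1

/-- A tournamenton is regular if almost every vertex has out-degree `1/2`. -/
def IsRegularT (W : ℝ → ℝ → ℝ) : Prop :=
  ∀ᵐ x : ℝ, x ∈ I01 → (∫ y in I01, W x y) = 1 / 2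

/-- `W` equals `1/2` almost everywhere on `[0,1]²`. -/
def ConstHalf (W : ℝ → ℝ → ℝ) : Prop :=
  ∀ᵐ p : ℝ × ℝ, p ∈ I01 ×ˢ I01 → W p.1 p.2 = 1 / 2

open scoped Classical in
/-- Homomorphism density of the digraph with vertex set `V` and edge relation `E`
in the tournamenton `W`. -/
def homDensity {V : Type} [Fintype V] (E : V → V → Prop) (W : ℝ → ℝ → ℝ) : ℝ :=
  ∫ x in Set.univ.pi (fun _ : V => I01),
    ∏ p ∈ Finset.univ.filter (fun p : V × V => E p.1 p.2), W (x p.1) (x p.2)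

/-- `E` is the edge relation of a tournament. -/
def IsTournament {V : Type} (E : V → V → Prop) : Prop :=
  (∀ v, ¬ E v v) ∧ ∀ u v : V, u ≠ v → (E u v ↔ ¬ E v u)

/-- the edge relation is transitive (for a tournament: a strict linear order). -/
def IsTransitive {V : Type} (E : V → V → Prop) : Prop :=
  ∀ u v w : V, E u v → E v w → E u w

/-- Vertex set of the blow-up `C[a,b,c]` of the cyclic triangle. -/
abbrev CV (a b c : ℕ) := Fin a ⊕ Fin b ⊕ Fin c

/-- Which of the three parts a vertex belongs to. -/
def cpart {a b c : ℕ} : CV a b c → Fin 3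
  | .inl _ => 0
  | .inr (.inl _) => 1
  | .inr (.inr _) => 2

/-- Index of a vertex inside its part. -/
def cidx {a b c : ℕ} : CV a b c → ℕ
  | .inl i => i
  | .inr (.inl i) => i
  | .inr (.inr i) => i

/-- Edges of `C[a,b,c]`: all edges from part 0 to part 1, part 1 to part 2 and
part 2 to part 0; no edges inside parts. -/
def CEdge (a b c : ℕ) (u v : CV a b c) : Prop := cpart v = cpart u + 1

/-- Edges of the tournament `T[a,b,c]`: `C[a,b,c]` plus a transitive tournament on
each of the three parts. -/
def TEdge (a b c : ℕ) (u v : CV a b c) : Prop :=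
  cpart v = cpart u + 1 ∨ (cpart u = cpart v ∧ cidx u < cidx v)

/-- Edges of `B[c]`: the digraph `C[1,1,c]` minus the edge between the two singleton
parts (a source, `c` middle vertices, a sink). -/
def BEdge (c : ℕ) (u v : CV 1 1 c) : Prop :=
  cpart v = cpart u + 1 ∧ cpart u ≠ 0

/-- `E` is isomorphic to the tournament `T[a,b,c]`. -/
def IsoToT {V : Type} (E : V → V → Prop) (a b c : ℕ) : Prop :=
  ∃ e : V ≃ CV a b c, ∀ u v : V, E u v ↔ TEdge a b c (e u) (e v)

/-- The tournament `E` contains a subtournament isomorphic to `E'`. -/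
def ContainsSub {V V' : Type} (E : V → V → Prop) (E' : V' → V' → Prop) : Prop :=
  ∃ f : V' → V, Function.Injective f ∧ ∀ u v : V', E' u v ↔ E (f u) (f v)

/-- The tournament `W₄`: a source dominating a cyclic triangle. -/
def W4Edge (u v : Fin 4) : Prop :=
  (u = 0 ∧ v ≠ 0) ∨ (u = 1 ∧ v = 2) ∨ (u = 2 ∧ v = 3) ∨ (u = 3 ∧ v = 1)

/-- The tournament `L₄`: a sink dominated by a cyclic triangle. -/
def L4Edge (u v : Fin 4) : Prop :=
  (v = 0 ∧ u ≠ 0) ∨ (u = 1 ∧ v = 2) ∨ (u = 2 ∧ v = 3) ∨ (u = 3 ∧ v = 1)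

/-- The 5-vertex carousel tournament `C₅`. -/
def C5Edge (u v : ZMod 5) : Prop := v - u = 1 ∨ v - u = 2

open scoped Classical in
def homWeight {V : Type} [Fintype V] (E : V → V → Prop) (W : ℝ → ℝ → ℝ) (x : V → ℝ) : ℝ :=
  ∏ p ∈ Finset.univ.filter (fun p : V × V => E p.1 p.2), W (x p.1) (x p.2)

section HomWeight

variable {V : Type} [Fintype V] {E : V → V → Prop} {W : ℝ → ℝ → ℝ}

lemma homDensity_eq_setIntegral_homWeight :
    homDensity E W = ∫ x in Set.univ.pi (fun _ : V => I01), homWeight E W x :=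
  rfl

lemma homWeight_comp_perm (σ : Equiv.Perm V) (hσ : ∀ a b, E (σ a) (σ b) ↔ E a b)
    (x : V → ℝ) : homWeight E W (x ∘ σ) = homWeight E W x := by
  classical
  refine Finset.prod_equiv (σ.prodCongr σ) (fun p => ?_) (fun p _ => rfl)
  simp [hσ]

open scoped Classical in
lemma homWeight_addEdge {u v : V} (huv : ¬ E u v) (x : V → ℝ) :
    homWeight (fun a b => E a b ∨ (a = u ∧ b = v)) W x = W (x u) (x v) * homWeight E W x := by
  rw [homWeight, homWeight, ← Finset.prod_insert (a := (u, v))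
    (f := fun p : V × V => W (x p.1) (x p.2)) (by simpa using huv)]
  congr 1
  ext ⟨a, b⟩
  simp [or_comm]

end HomWeight

lemma setIntegral_univ_pi_comp_perm {ι α G : Type*} [Fintype ι] [MeasureSpace α]
    [SigmaFinite (volume : Measure α)] [NormedAddCommGroup G] [NormedSpace ℝ G]
    (s : Set α) (σ : Equiv.Perm ι) (g : (ι → α) → G) :
    ∫ x in Set.univ.pi (fun _ => s), g (x ∘ σ) = ∫ x in Set.univ.pi (fun _ => s), g x := by
  have hT : ∀ x, MeasurableEquiv.piCongrLeft (fun _ : ι => α) σ.symm x = x ∘ σ :=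
    fun x => funext fun a => by
      simpa using MeasurableEquiv.piCongrLeft_apply_apply (β := fun _ => α) σ.symm x (σ a)
  have hpre : MeasurableEquiv.piCongrLeft (fun _ : ι => α) σ.symm ⁻¹' Set.univ.pi (fun _ => s)
      = Set.univ.pi (fun _ => s) := by
    ext x
    simp only [Set.mem_preimage, hT, Set.mem_univ_pi, Function.comp_apply]
    exact (σ.surjective.forall (p := fun i => x i ∈ s)).symm
  rw [← (volume_measurePreserving_piCongrLeft (fun _ : ι => α) σ.symm).setIntegral_preimage_emb
    (MeasurableEquiv.measurableEmbedding _) g, hpre]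
  simp_rw [hT]

section Twins

variable {V : Type} [DecidableEq V] {E : V → V → Prop} {u v : V}

lemma swap_left_iff_of_twins (htw : ∀ w : V, (E u w ↔ E v w) ∧ (E w u ↔ E w v)) (a b : V) :
    E (Equiv.swap u v a) b ↔ E a b := by
  rw [Equiv.swap_apply_def]
  split_ifs with hu hv
  · exact hu ▸ (htw b).1.symm
  · exact hv ▸ (htw b).1
  · rfl

lemma swap_right_iff_of_twins (htw : ∀ w : V, (E u w ↔ E v w) ∧ (E w u ↔ E w v)) (a b : V) :
    E a (Equiv.swap u v b) ↔ E a b := by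
  rw [Equiv.swap_apply_def]
  split_ifs with hu hv
  · exact hu ▸ (htw a).2.symm
  · exact hv ▸ (htw a).2
  · rfl

lemma swap_iff_of_twins (htw : ∀ w : V, (E u w ↔ E v w) ∧ (E w u ↔ E w v)) (a b : V) :
    E (Equiv.swap u v a) (Equiv.swap u v b) ↔ E a b :=
  (swap_left_iff_of_twins htw a _).trans (swap_right_iff_of_twins htw a b)

end Twins

namespace IsTournamenton

variable {V : Type} {E : V → V → Prop} {W : ℝ → ℝ → ℝ}

lemma measurable_apply_eval (hW : IsTournamenton W) (a b : V) :
    Measurable fun x : V → ℝ => W (x a) (x b) :=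
  show Measurable (Function.uncurry W ∘ fun x : V → ℝ => (x a, x b)) from
    hW.1.comp ((measurable_pi_apply a).prodMk (measurable_pi_apply b))

variable [Fintype V]

lemma homWeight_mem_Icc (hW : IsTournamenton W) {x : V → ℝ}
    (hx : x ∈ Set.univ.pi (fun _ : V => I01)) : homWeight E W x ∈ Set.Icc 0 1 := by
  have hWx : ∀ a b, 0 ≤ W (x a) (x b) ∧ W (x a) (x b) ≤ 1 := fun a b =>
    ⟨(hW.2 _ (hx a trivial) _ (hx b trivial)).1, (hW.2 _ (hx a trivial) _ (hx b trivial)).2.1⟩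
  exact ⟨Finset.prod_nonneg fun p _ => (hWx p.1 p.2).1,
    Finset.prod_le_one (fun p _ => (hWx p.1 p.2).1) (fun p _ => (hWx p.1 p.2).2)⟩

lemma integrableOn_mul_homWeight (hW : IsTournamenton W) (a b : V) :
    IntegrableOn (fun x => W (x a) (x b) * homWeight E W x) (Set.univ.pi fun _ : V => I01) := by
  refine IntegrableOn.of_bound (isCompact_univ_pi fun _ => isCompact_Icc).measure_lt_top
    ?_ 1 ?_
  · exact ((hW.measurable_apply_eval a b).mul
      (Finset.measurable_prod _ fun p _ => hW.measurable_apply_eval p.1 p.2)).aestronglyMeasurable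
  · filter_upwards [ae_restrict_mem (MeasurableSet.univ_pi fun _ => measurableSet_Icc)] with x hx
    obtain ⟨hF0, hF1⟩ := hW.homWeight_mem_Icc (E := E) hx
    obtain ⟨hW0, hW1, -⟩ := hW.2 _ (hx a trivial) _ (hx b trivial)
    rw [Real.norm_of_nonneg (mul_nonneg hW0 hF0)]
    exact mul_le_one₀ hW1 hF0 hF1

lemma homDensity_eq_add (hW : IsTournamenton W) (a b : V) :
    homDensity E W = (∫ x in Set.univ.pi (fun _ : V => I01), W (x a) (x b) * homWeight E W x)
      + ∫ x in Set.univ.pi (fun _ : V => I01), W (x b) (x a) * homWeight E W x := by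
  rw [homDensity_eq_setIntegral_homWeight, ← integral_add (hW.integrableOn_mul_homWeight a b)
    (hW.integrableOn_mul_homWeight b a)]
  refine setIntegral_congr_fun (MeasurableSet.univ_pi fun _ => measurableSet_Icc) fun x hx => ?_
  rw [← add_mul, (hW.2 _ (hx a trivial) _ (hx b trivial)).2.2, one_mul]

end IsTournamenton

lemma setIntegral_twin_edge_comm {V : Type} [Fintype V] {E : V → V → Prop} {u v : V}
    (htw : ∀ w : V, (E u w ↔ E v w) ∧ (E w u ↔ E w v)) (W : ℝ → ℝ → ℝ) :
    ∫ x in Set.univ.pi (fun _ : V => I01), W (x v) (x u) * homWeight E W x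
      = ∫ x in Set.univ.pi (fun _ : V => I01), W (x u) (x v) * homWeight E W x := by
  classical
  have h := setIntegral_univ_pi_comp_perm I01 (Equiv.swap u v)
    (fun x => W (x u) (x v) * homWeight E W x)
  simpa only [Function.comp_apply, Equiv.swap_apply_left, Equiv.swap_apply_right,
    homWeight_comp_perm _ (swap_iff_of_twins htw)] using h

theorem stmt17_general {V : Type} [Fintype V] (E : V → V → Prop) (u v : V)
    (hne : ¬ E u v ∧ ¬ E v u)
    (htw : ∀ w : V, (E u w ↔ E v w) ∧ (E w u ↔ E w v))
    (W : ℝ → ℝ → ℝ) (hW : IsTournamenton W) :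
    homDensity (fun x y => E x y ∨ (x = u ∧ y = v)) W = homDensity E W / 2 := by
  calc homDensity (fun x y => E x y ∨ (x = u ∧ y = v)) W
      = ∫ x in Set.univ.pi (fun _ : V => I01), W (x u) (x v) * homWeight E W x := by
        simp_rw [homDensity_eq_setIntegral_homWeight, homWeight_addEdge hne.1]
    _ = homDensity E W / 2 := by
        rw [hW.homDensity_eq_add u v, setIntegral_twin_edge_comm htw]
        ring

theorem stmt17 {V : Type} [Fintype V] (E : V → V → Prop)
    (hsimple : ∀ w : V, ¬ E w w) (u v : V) (huv : u ≠ v)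
    (hne : ¬ E u v ∧ ¬ E v u)
    (htw : ∀ w : V, (E u w ↔ E v w) ∧ (E w u ↔ E w v))
    (W : ℝ → ℝ → ℝ) (hW : IsTournamenton W) :
    homDensity (fun x y => E x y ∨ (x = u ∧ y = v)) W = homDensity E W / 2 :=
  stmt17_general E u v hne htw W hW

end
end

section
/- For every finite tournament T with n vertices there exists a regular tournamenton W such that t(T, W) ≥ 2 · (2n)^{-n}. -/
open MeasureTheory

noncomputable section

/-!
Double `T`: on `Bool × V` take two copies of `T` with every arc between the copies reversed,
and weight `1/2` on the loops. Each row of this weighted tournament sums to `n`, so its step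
function on `2n` equal cells of `[0,1)` is a regular tournamenton `W`. For a step function,
`t(T, W)` is the average over all maps `V → Bool × V` of the product of the edge weights; the two
maps `v ↦ (b, v)` have weight `1` and no weight is negative, so `t(T, W) ≥ 2 (2n)⁻ⁿ`.
-/

open scoped ENNReal

section Cells

variable (α : Type*) [Fintype α] [Nonempty α]

/-- The cell of `x` when `[0,1)` is cut into `card α` intervals of equal length,
enumerated by `α`; points outside `[0,1)` get junk values. -/
def cellOf (x : ℝ) : α :=
  (Fintype.equivFin α).symm (Fin.ofNat _ ⌊x * Fintype.card α⌋₊)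

lemma measurable_cellOf [MeasurableSpace α] : Measurable (cellOf α) :=
  (measurable_of_countable fun n : ℕ => (Fintype.equivFin α).symm (Fin.ofNat _ n)).comp
    (measurable_id.mul_const (Fintype.card α : ℝ)).nat_floor

lemma cellOf_preimage_inter_Ico (a : α) :
    cellOf α ⁻¹' {a} ∩ Set.Ico 0 1 =
      Set.Ico ((Fintype.equivFin α a : ℝ) / Fintype.card α)
        (((Fintype.equivFin α a : ℝ) + 1) / Fintype.card α) := by
  have hN : (0 : ℝ) < Fintype.card α := by exact_mod_cast Fintype.card_pos
  have hi := (Fintype.equivFin α a).isLt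
  ext x
  simp only [Set.mem_inter_iff, Set.mem_preimage, Set.mem_singleton_iff, Set.mem_Ico,
    cellOf, Equiv.symm_apply_eq, Fin.ext_iff, Fin.val_ofNat, div_le_iff₀ hN, lt_div_iff₀ hN]
  constructor
  · rintro ⟨hx, hx0, hx1⟩
    have hfloor : ⌊x * Fintype.card α⌋₊ < Fintype.card α :=
      (Nat.floor_lt (by positivity)).2 (by nlinarith)
    rw [Nat.mod_eq_of_lt hfloor] at hx
    rw [← hx]
    exact ⟨Nat.floor_le (by positivity), Nat.lt_floor_add_one _⟩
  · rintro ⟨hx0, hx1⟩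
    have hpos : 0 ≤ x * Fintype.card α := le_trans (by positivity) hx0
    rw [(Nat.floor_eq_iff hpos).2 ⟨hx0, hx1⟩, Nat.mod_eq_of_lt hi]
    have : ((Fintype.equivFin α a : ℕ) : ℝ) + 1 ≤ Fintype.card α := by exact_mod_cast hi
    exact ⟨rfl, nonneg_of_mul_nonneg_left hpos hN, by nlinarith⟩

lemma map_cellOf [MeasurableSpace α] [MeasurableSingletonClass α] :
    (volume.restrict I01).map (cellOf α) = (Fintype.card α : ℝ≥0∞)⁻¹ • Measure.count := by
  have hN : (0 : ℝ) < Fintype.card α := by exact_mod_cast Fintype.card_pos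
  rw [Measure.ext_iff_singleton]
  intro a
  have hlength : (((Fintype.equivFin α a : ℝ) + 1) / Fintype.card α
      - (Fintype.equivFin α a : ℝ) / Fintype.card α) = (Fintype.card α : ℝ)⁻¹ := by ring
  rw [Measure.map_apply (measurable_cellOf α) (measurableSet_singleton a), I01,
    ← Measure.restrict_congr_set Ico_ae_eq_Icc,
    Measure.restrict_apply (measurableSet_singleton a |>.preimage (measurable_cellOf α)),
    cellOf_preimage_inter_Ico, Real.volume_Ico, hlength, ENNReal.ofReal_inv_of_pos hN,
    ENNReal.ofReal_natCast, Measure.smul_apply, Measure.count_singleton, smul_eq_mul, mul_one]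

lemma setIntegral_comp_cellOf (f : α → ℝ) :
    ∫ x in I01, f (cellOf α x) = (∑ a, f a) / Fintype.card α := by
  let _ : MeasurableSpace α := ⊤
  rw [← integral_map (measurable_cellOf α).aemeasurable
    (measurable_of_countable f).aestronglyMeasurable, map_cellOf,
    integral_fintype (Integrable.of_finite.smul_measure (by simp)), Finset.sum_div]
  simp [measureReal_def, div_eq_inv_mul]

lemma setIntegral_pi_comp_cellOf {V : Type*} [Fintype V] [DecidableEq V] (F : (V → α) → ℝ) :
    ∫ x in Set.univ.pi (fun _ : V => I01), F (fun v => cellOf α (x v)) =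
      (∑ k, F k) / (Fintype.card α : ℝ) ^ Fintype.card V := by
  let _ : MeasurableSpace α := ⊤
  have : IsFiniteMeasure (volume.restrict I01) := by unfold I01; infer_instance
  have : IsFiniteMeasure ((Fintype.card α : ℝ≥0∞)⁻¹ • (Measure.count : Measure α)) :=
    ⟨by simp [ENNReal.mul_lt_top_iff, Fintype.card_pos]⟩
  have hcells : Measurable fun (x : V → ℝ) v => cellOf α (x v) :=
    measurable_pi_lambda _ fun v => (measurable_cellOf α).comp (measurable_pi_apply v)
  rw [volume_pi, Measure.restrict_pi_pi,
    ← integral_map hcells.aemeasurable (measurable_of_countable F).aestronglyMeasurable,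
    Measure.pi_map_pi fun _ => (measurable_cellOf α).aemeasurable, map_cellOf,
    integral_fintype .of_finite, Finset.sum_div]
  refine Finset.sum_congr rfl fun k _ => ?_
  rw [← Set.univ_pi_singleton, measureReal_def, Measure.pi_pi]
  simp [div_eq_inv_mul]

end Cells

section StepKernel

variable {α : Type*} [Fintype α] [Nonempty α]

def stepKernel (M : α → α → ℝ) (x y : ℝ) : ℝ := M (cellOf α x) (cellOf α y)

lemma isTournamenton_stepKernel {M : α → α → ℝ} (h0 : ∀ a b, 0 ≤ M a b)
    (hswap : ∀ a b, M a b + M b a = 1) : IsTournamenton (stepKernel M) := by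
  let _ : MeasurableSpace α := ⊤
  refine ⟨?_, fun x _ y _ => ⟨h0 _ _, ?_, hswap _ _⟩⟩
  · exact (measurable_of_countable (Function.uncurry M)).comp
      ((measurable_cellOf α).prodMap (measurable_cellOf α))
  · change M _ _ ≤ 1
    linarith [h0 (cellOf α y) (cellOf α x), hswap (cellOf α x) (cellOf α y)]

lemma isRegularT_stepKernel {M : α → α → ℝ} (hrow : ∀ a, ∑ b, M a b = Fintype.card α / 2) :
    IsRegularT (stepKernel M) :=
  .of_forall fun x _ => by
    have hN : (Fintype.card α : ℝ) ≠ 0 := by exact_mod_cast Fintype.card_ne_zero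
    unfold stepKernel
    rw [setIntegral_comp_cellOf, hrow]
    field_simp

open scoped Classical in
lemma homDensity_stepKernel {V : Type} [Fintype V] (E : V → V → Prop) (M : α → α → ℝ) :
    homDensity E (stepKernel M) =
      (∑ k : V → α, ∏ p ∈ Finset.univ.filter (fun p : V × V => E p.1 p.2), M (k p.1) (k p.2)) /
        (Fintype.card α : ℝ) ^ Fintype.card V :=
  setIntegral_pi_comp_cellOf α fun k =>
    ∏ p ∈ Finset.univ.filter (fun p : V × V => E p.1 p.2), M (k p.1) (k p.2)

open scoped Classical in
lemma card_div_le_homDensity_stepKernel {V : Type} [Fintype V] {E : V → V → Prop}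
    {M : α → α → ℝ} (h0 : ∀ a b, 0 ≤ M a b) (S : Finset (V → α))
    (hS : ∀ k ∈ S, ∀ u v, E u v → M (k u) (k v) = 1) :
    (S.card : ℝ) / (Fintype.card α : ℝ) ^ Fintype.card V ≤ homDensity E (stepKernel M) := by
  rw [homDensity_stepKernel]
  gcongr
  calc (S.card : ℝ)
      = ∑ k ∈ S, ∏ p ∈ Finset.univ.filter (fun p : V × V => E p.1 p.2), M (k p.1) (k p.2) := by
        rw [Finset.card_eq_sum_ones, Nat.cast_sum, Nat.cast_one]
        refine Finset.sum_congr rfl fun k hk => (Finset.prod_eq_one fun p hp => ?_).symm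
        exact hS k hk _ _ (Finset.mem_filter.mp hp).2
    _ ≤ _ := Finset.sum_le_sum_of_subset_of_nonneg (Finset.subset_univ S)
        fun k _ _ => Finset.prod_nonneg fun p _ => h0 _ _

end StepKernel

section Doubling

variable {V : Type}

open scoped Classical in
/-- The diagonal value `1/2` makes `A u v + A v u = 1` hold also for `u = v`. -/
def tournamentMatrix (E : V → V → Prop) (u v : V) : ℝ :=
  if u = v then 1 / 2 else if E u v then 1 else 0

lemma tournamentMatrix_nonneg (E : V → V → Prop) (u v : V) : 0 ≤ tournamentMatrix E u v := by
  unfold tournamentMatrix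
  split_ifs <;> norm_num

lemma tournamentMatrix_of_adj {E : V → V → Prop} (hT : IsTournament E) {u v : V} (h : E u v) :
    tournamentMatrix E u v = 1 := by
  have huv : u ≠ v := by rintro rfl; exact hT.1 u h
  simp [tournamentMatrix, huv, h]

lemma tournamentMatrix_add_swap {E : V → V → Prop} (hT : IsTournament E) (u v : V) :
    tournamentMatrix E u v + tournamentMatrix E v u = 1 := by
  by_cases huv : u = v
  · subst huv
    simp only [tournamentMatrix, if_true]
    norm_num
  · have hiff := hT.2 u v huv
    by_cases h : E u v
    · simp [tournamentMatrix, huv, Ne.symm huv, h, hiff.mp h]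
    · simp [tournamentMatrix, huv, Ne.symm huv, h, not_not.mp (mt hiff.mpr h)]

def doubleMatrix (A : V → V → ℝ) (p q : Bool × V) : ℝ :=
  if p.1 = q.1 then A p.2 q.2 else A q.2 p.2

variable {A : V → V → ℝ}

lemma doubleMatrix_nonneg (h0 : ∀ u v, 0 ≤ A u v) (p q : Bool × V) : 0 ≤ doubleMatrix A p q := by
  unfold doubleMatrix
  split_ifs <;> apply h0

lemma doubleMatrix_add_swap (hswap : ∀ u v, A u v + A v u = 1) (p q : Bool × V) :
    doubleMatrix A p q + doubleMatrix A q p = 1 := by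
  by_cases h : p.1 = q.1
  · simp only [doubleMatrix, if_pos h, if_pos h.symm, hswap]
  · simp only [doubleMatrix, if_neg h, if_neg (Ne.symm h), add_comm, hswap]

/-- Each row of the double meets both `A u v` and `A v u`, so it has sum `card V` even though
the rows of `A` need not be balanced. -/
lemma sum_doubleMatrix [Fintype V] (hswap : ∀ u v, A u v + A v u = 1) (p : Bool × V) :
    ∑ q, doubleMatrix A p q = Fintype.card V := by
  rw [Fintype.sum_prod_type_right]
  have hcol : ∀ v, ∑ b, doubleMatrix A p (b, v) = 1 := by
    intro v
    rcases p with ⟨_ | _, u⟩ <;> simp [doubleMatrix, hswap]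
  rw [Finset.sum_congr rfl fun v _ => hcol v]
  simp

end Doubling

theorem stmt18 {V : Type} [Fintype V] (E : V → V → Prop) (hT : IsTournament E)
    (hn : 0 < Fintype.card V) :
    ∃ W : ℝ → ℝ → ℝ, IsTournamenton W ∧ IsRegularT W ∧
      2 * (2 * (Fintype.card V : ℝ)) ^ (-(Fintype.card V : ℤ)) ≤ homDensity E W := by
  classical
  have : Nonempty V := Fintype.card_pos_iff.mp hn
  have hswap := tournamentMatrix_add_swap hT
  have h0 := doubleMatrix_nonneg (tournamentMatrix_nonneg E)
  refine ⟨stepKernel (doubleMatrix (tournamentMatrix E)),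
    isTournamenton_stepKernel h0 (doubleMatrix_add_swap hswap), isRegularT_stepKernel ?_, ?_⟩
  · intro p
    rw [sum_doubleMatrix hswap, Fintype.card_prod, Fintype.card_bool]
    push_cast
    ring
  let copy : Bool → V → Bool × V := fun b v => (b, v)
  have hcopy : copy true ≠ copy false := fun h => by
    simpa [copy] using congrFun h (Classical.arbitrary V)
  have hdens := card_div_le_homDensity_stepKernel (E := E) h0 {copy true, copy false} <| by
    simp only [Finset.mem_insert, Finset.mem_singleton]
    rintro k (rfl | rfl) u v huv <;> simpa [copy, doubleMatrix] using tournamentMatrix_of_adj hT huv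
  rw [Finset.card_pair hcopy, Fintype.card_prod, Fintype.card_bool] at hdens
  convert hdens using 1
  push_cast
  rw [zpow_neg, zpow_natCast, div_eq_mul_inv]

end
end
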